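/- arXiv:2402.02250 — 2 statements merged into one kernel-verified Lean document; each statement's English description precedes it below -/
import Mathlib

section
/- For every integer n ≥ 1, PL(n), the number of distinct lengths of the words B(λ) as λ ranges over all palindrome partitions of n, equals the number of factorizations 2(n+1) = x·y with 2 ≤ x ≤ y (equivalently, the number of unordered factorizations of 2(n+1) into two factors each at least 2). -/
/-- A partition encoded as its list of parts in weakly decreasing order,
all parts positive. -/
def IsPartition (l : List ℕ) : Prop :=
  List.Pairwise (· ≥ ·) l ∧ ∀ x ∈ l, 0 < x

/-- Auxiliary: given the previous part and the remaining parts (read from the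
smallest part upward), produce the rest of the boundary word. -/
def wordAux : ℕ → List ℕ → List Bool
  | _, [] => []
  | prev, a :: rest => (false :: List.replicate (a - prev) true) ++ wordAux a rest

/-- `partitionWord l` is the word `B(λ)`: trace the southeast boundary of the
Young diagram of `λ` from southwest to northeast, recording `true` for each
horizontal step and `false` for each vertical step, then delete the initial
`true` and the final `false`. -/
def partitionWord (l : List ℕ) : List Bool :=
  match l.reverse with
  | [] => []
  | a :: rest => List.replicate (a - 1) true ++ wordAux a rest

/-- The conjugate (transpose) partition. -/
def conjugate (l : List ℕ) : List ℕ :=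
  (List.range l.headI).map fun j => (l.filter fun x => decide (j < x)).length

/-- `PP n` is the number of palindrome partitions of `n`. -/
noncomputable def PP (n : ℕ) : ℕ :=
  {l : List ℕ | IsPartition l ∧ l.sum = n ∧
    partitionWord l = (partitionWord l).reverse}.ncard

/-- `RCount n` is the number of partitions `λ` of `n` such that the partition
corresponding to the reversed word `B(λ)ʳ` is also a partition of `n`. -/
noncomputable def RCount (n : ℕ) : ℕ :=
  {l : List ℕ | IsPartition l ∧ l.sum = n ∧
    ∃ μ : List ℕ, IsPartition μ ∧ μ.sum = n ∧
      partitionWord μ = (partitionWord l).reverse}.ncard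

/-- `T n k` is the number of nondecreasing sequences of `n` integers in
`[-k, k]` summing to zero. -/
noncomputable def T (n k : ℕ) : ℕ :=
  {f : Fin n → ℤ | (∀ i j : Fin n, i ≤ j → f i ≤ f j) ∧
    (∀ i, -(k : ℤ) ≤ f i ∧ f i ≤ (k : ℤ)) ∧ ∑ i, f i = 0}.ncard

/-- `NRect a b` is the number of partitions of `a*b/2` with at most `a` parts,
each part at most `b`. -/
noncomputable def NRect (a b : ℕ) : ℕ :=
  {μ : Fin a → ℕ | (∀ i j : Fin a, i ≤ j → μ j ≤ μ i) ∧
    (∀ i, μ i ≤ b) ∧ ∑ i, μ i = a * b / 2}.ncard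

/-!
Write `h` and `z` for the numbers of letters `1` and `0` in `w = B(λ)`, and `inv w` for the number
of pairs `1 … 0` in `w`. Counting the cells of `λ` by the first row, the first column and the rest
gives `|λ| = h + z + 1 + inv w`. Reversal exchanges such pairs with the pairs `0 … 1`, so
`inv w + inv wʳ = h z`; for a palindrome this turns the cell count into
`2 (|λ| + 1) = (h + 2) (z + 2)`, while `|w| = h + z`. Conversely, if `2 (n + 1) = x y` then one
factor is even, say `x = 2p + 2`, and the partition `(2p + 1, (p + 1)^(y - 2))` of `n` has the
palindromic word `1^p 0^(y-2) 1^p`, of length `x + y - 4`. Factor pairs `x ≤ y` of a fixed number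
are determined by `x + y`, so the lengths are in bijection with the factor pairs.
-/

def inversions : List Bool → ℕ
  | [] => 0
  | a :: w => inversions w + if a then w.count false else 0

lemma inversions_append_singleton (w : List Bool) (a : Bool) :
    inversions (w ++ [a]) = inversions w + if a then 0 else w.count true := by
  induction w with
  | nil => cases a <;> simp [inversions]
  | cons b t ih =>
    cases b <;> cases a <;> simp [inversions, ih, List.count_append, add_add_add_comm]

lemma inversions_reverse_add_inversions (w : List Bool) :
    inversions w.reverse + inversions w = w.count true * w.count false := by
  induction w with
  | nil => simp [inversions]
  | cons a t ih =>
    rw [List.reverse_cons, inversions_append_singleton]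
    cases a <;> grind [inversions]

lemma inversions_replicate_true_append (k : ℕ) (w : List Bool) :
    inversions (List.replicate k true ++ w) = inversions w + k * w.count false := by
  induction k with
  | zero => simp
  | succ k ih => grind [inversions]

lemma count_false_wordAux (prev : ℕ) (r : List ℕ) : (wordAux prev r).count false = r.length := by
  induction r generalizing prev with
  | nil => simp [wordAux]
  | cons a rest ih => simp [wordAux, List.count_append, List.count_replicate, ih]

lemma count_true_wordAux {prev : ℕ} {r : List ℕ} (h : (prev :: r).IsChain (· ≤ ·)) :
    (wordAux prev r).count true + prev = r.getLastD prev := by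
  induction r generalizing prev with
  | nil => simp [wordAux]
  | cons a rest ih =>
    rw [List.isChain_cons_cons] at h
    have hstep :
        (wordAux prev (a :: rest)).count true = a - prev + (wordAux a rest).count true := by
      simp [wordAux, List.count_append]
    rw [hstep, List.getLastD_cons, ← ih h.2]
    omega

lemma inversions_wordAux {prev : ℕ} {r : List ℕ} (h : (prev :: r).IsChain (· ≤ ·)) :
    inversions (wordAux prev r) + r.length * prev + r.getLastD prev = r.sum + prev := by
  induction r generalizing prev with
  | nil => simp [wordAux, inversions]
  | cons a rest ih =>
    rw [List.isChain_cons_cons] at h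
    obtain ⟨c, rfl⟩ := Nat.exists_eq_add_of_le h.1
    have := ih h.2
    simp only [wordAux, List.cons_append, inversions, inversions_replicate_true_append,
      count_false_wordAux, List.getLastD_cons, List.length_cons, List.sum_cons] at this ⊢
    simp only [Bool.false_eq_true, if_false, add_tsub_cancel_left]
    nlinarith

lemma partitionWord_of_reverse_eq_cons {l rest : List ℕ} {a : ℕ} (h : l.reverse = a :: rest) :
    partitionWord l = List.replicate (a - 1) true ++ wordAux a rest := by
  rw [partitionWord, h]

theorem IsPartition.sum_eq_length_partitionWord_add_inversions {l : List ℕ} (hl : IsPartition l)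
    (hne : l ≠ []) :
    l.sum = (partitionWord l).length + 1 + inversions (partitionWord l) := by
  obtain ⟨a, rest, hrev⟩ : ∃ a rest, l.reverse = a :: rest :=
    List.exists_cons_of_ne_nil (List.reverse_ne_nil_iff.2 hne)
  have hchain : (a :: rest).IsChain (· ≤ ·) :=
    List.isChain_iff_pairwise.2 (hrev ▸ List.pairwise_reverse.2 hl.1)
  have ha : 1 ≤ a := hl.2 a (List.mem_reverse.1 (hrev ▸ List.mem_cons_self))
  have hsum : l.sum = a + rest.sum := by rw [← List.sum_reverse, hrev, List.sum_cons]
  have hinv := inversions_wordAux hchain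
  have htrue := count_true_wordAux hchain
  have hlen := List.count_true_add_count_false (wordAux a rest)
  rw [partitionWord_of_reverse_eq_cons hrev, hsum, inversions_replicate_true_append,
    count_false_wordAux, List.length_append, List.length_replicate]
  rw [count_false_wordAux] at hlen
  obtain ⟨b, rfl⟩ := Nat.exists_eq_add_of_le' ha
  simp only [add_tsub_cancel_right]
  nlinarith

theorem IsPartition.mul_eq_of_partitionWord_reverse {l : List ℕ} (hl : IsPartition l)
    (hne : l ≠ []) (hpal : partitionWord l = (partitionWord l).reverse) :
    ((partitionWord l).count true + 2) * ((partitionWord l).count false + 2) = 2 * (l.sum + 1) := by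
  have hsum := hl.sum_eq_length_partitionWord_add_inversions hne
  have hswap := inversions_reverse_add_inversions (partitionWord l)
  have hlen := List.count_true_add_count_false (partitionWord l)
  rw [← hpal] at hswap
  nlinarith

theorem IsPartition.exists_factor_pair_of_partitionWord_reverse {l : List ℕ} (hl : IsPartition l)
    (hne : l ≠ []) (hpal : partitionWord l = (partitionWord l).reverse) :
    ∃ x y : ℕ, x * y = 2 * (l.sum + 1) ∧ 2 ≤ x ∧ x ≤ y ∧ x + y - 4 = (partitionWord l).length := by
  have hmul := hl.mul_eq_of_partitionWord_reverse hne hpal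
  have hlen := List.count_true_add_count_false (partitionWord l)
  rcases le_total ((partitionWord l).count true) ((partitionWord l).count false) with hle | hle
  · exact ⟨_, _, hmul, by omega, by omega, by omega⟩
  · exact ⟨_, _, (mul_comm _ _).trans hmul, by omega, by omega, by omega⟩

lemma wordAux_replicate_append_singleton (a b k : ℕ) :
    wordAux a (List.replicate k a ++ [b]) =
      List.replicate (k + 1) false ++ List.replicate (b - a) true := by
  induction k with
  | zero => simp [wordAux]
  | succ k ih => simp [List.replicate_succ, wordAux, ih]

lemma partitionWord_cons_replicate (p z : ℕ) :
    partitionWord ((2 * p + 1) :: List.replicate z (p + 1)) =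
      List.replicate p true ++ List.replicate z false ++ List.replicate p true := by
  cases z with
  | zero => simp [partitionWord, wordAux, two_mul]
  | succ k =>
    have hrev : ((2 * p + 1) :: List.replicate (k + 1) (p + 1)).reverse
        = (p + 1) :: (List.replicate k (p + 1) ++ [2 * p + 1]) := by
      simp [List.replicate_succ']
    rw [partitionWord_of_reverse_eq_cons hrev, wordAux_replicate_append_singleton,
      show 2 * p + 1 - (p + 1) = p by omega, add_tsub_cancel_right, List.append_assoc]

theorem exists_palindrome_partition_of_mul_eq {n x y : ℕ} (h : x * y = 2 * (n + 1))
    (hx : 2 ≤ x) (hy : 2 ≤ y) :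
    ∃ l : List ℕ, IsPartition l ∧ l.sum = n ∧ partitionWord l = (partitionWord l).reverse ∧
      (partitionWord l).length = x + y - 4 := by
  wlog hxe : Even x generalizing x y
  · have hye : Even y := (Nat.even_mul.1 ⟨n + 1, by rw [h]; ring⟩).resolve_left hxe
    simpa [add_comm] using this (by rwa [mul_comm]) hy hx hye
  obtain ⟨p, rfl⟩ : ∃ p, x = 2 * p + 2 := by obtain ⟨c, rfl⟩ := hxe; exact ⟨c - 1, by omega⟩
  obtain ⟨z, rfl⟩ := Nat.exists_eq_add_of_le' hy
  refine ⟨(2 * p + 1) :: List.replicate z (p + 1), ⟨?_, ?_⟩, ?_, ?_, ?_⟩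
  · grind [List.pairwise_cons]
  · simp [List.mem_replicate]
  · simp only [List.sum_cons, List.sum_replicate, smul_eq_mul]
    nlinarith
  · simp [partitionWord_cons_replicate, List.reverse_replicate]
  · simp only [partitionWord_cons_replicate, List.length_append, List.length_replicate]
    omega

theorem injOn_add_setOf_mul_eq (N : ℕ) :
    Set.InjOn (fun p : ℕ × ℕ => p.1 + p.2) {p : ℕ × ℕ | p.1 * p.2 = N ∧ p.1 ≤ p.2} := by
  rintro ⟨x, y⟩ ⟨hxy, hle⟩ ⟨x', y'⟩ ⟨hxy', hle'⟩ hsum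
  simp only at hxy hle hxy' hle' hsum
  -- `(y - x)^2 = (x + y)^2 - 4N` determines the difference as well as the sum.
  have hdiff : ((y : ℤ) - x) ^ 2 = ((y' : ℤ) - x') ^ 2 := by
    have hprod : (x : ℤ) * y = x' * y' := by exact_mod_cast hxy.trans hxy'.symm
    have hsum' : (x : ℤ) + y = x' + y' := by exact_mod_cast hsum
    linear_combination ((x : ℤ) + y + x' + y') * hsum' - 4 * hprod
  have hdiff' : (y : ℤ) - x = y' - x' :=
    (pow_left_inj₀ (by omega) (by omega) two_ne_zero).1 hdiff
  ext <;> simp only <;> omega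

/-- `PL(n)`, the number of distinct lengths of `B(λ)` over the
palindrome partitions `λ` of `n`, equals the number of factorizations
`x * y = 2(n+1)` with `2 ≤ x ≤ y`. -/
theorem palindromePaper_stmt10 (n : ℕ) (hn : 1 ≤ n) :
    {m : ℕ | ∃ l : List ℕ, IsPartition l ∧ l.sum = n ∧
        partitionWord l = (partitionWord l).reverse ∧
        (partitionWord l).length = m}.ncard
      = {p : ℕ × ℕ | p.1 * p.2 = 2 * (n + 1) ∧ 2 ≤ p.1 ∧ p.1 ≤ p.2}.ncard := by
  have hlengths : {m : ℕ | ∃ l : List ℕ, IsPartition l ∧ l.sum = n ∧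
        partitionWord l = (partitionWord l).reverse ∧ (partitionWord l).length = m} =
      (fun p : ℕ × ℕ => p.1 + p.2 - 4) ''
        {p : ℕ × ℕ | p.1 * p.2 = 2 * (n + 1) ∧ 2 ≤ p.1 ∧ p.1 ≤ p.2} := by
    ext m
    constructor
    · rintro ⟨l, hl, rfl, hpal, rfl⟩
      have hne : l ≠ [] := by rintro rfl; simp at hn
      obtain ⟨x, y, hxy, hx, hle, hlen⟩ :=
        hl.exists_factor_pair_of_partitionWord_reverse hne hpal
      exact ⟨(x, y), ⟨hxy, hx, hle⟩, hlen⟩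
    · rintro ⟨⟨x, y⟩, ⟨hxy, hx, hle⟩, rfl⟩
      exact exists_palindrome_partition_of_mul_eq hxy hx (hx.trans hle)
  have hinj : Set.InjOn (fun p : ℕ × ℕ => p.1 + p.2 - 4)
      {p : ℕ × ℕ | p.1 * p.2 = 2 * (n + 1) ∧ 2 ≤ p.1 ∧ p.1 ≤ p.2} :=
    fun ⟨x, y⟩ ⟨hxy, hx, hle⟩ ⟨x', y'⟩ ⟨hxy', hx', hle'⟩ h =>
      injOn_add_setOf_mul_eq _ ⟨hxy, hle⟩ ⟨hxy', hle'⟩ (by simp only at h hle hle' ⊢; omega)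
  rw [hlengths, hinj.ncard_image]
end

section
/- For every integer n ≥ 1, R(n), the number of partitions λ of n such that the partition P(B(λ)^r) corresponding to the reversed word is also a partition of n, equals Σ N(2k, 2l), summed over all pairs of nonnegative integers (k, l) with 2kl + 2k + 2l + 1 = n, plus 2·Σ N(2k+1, 2l), summed over all pairs of nonnegative integers (k, l) with 2kl + 2k + 3l + 2 = n, where N(a, b) denotes the number of partitions of ab/2 having at most a parts with each part at most b. (By the middle-coefficient result for Gaussian binomials, N(2k, 2l) = T(2l, k).) -/
/-!
Trace `λ` from its smallest part upward: each `false` in `w = B(λ)` closes a row one longer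
than the number of `true`s before it, and the last row has length `1 + #true`. Hence `λ` is
recovered from `w`, and `|λ| = |w| + inv w + 1`, where `inv w` counts the pairs of a `true`
before a `false`. As `inv wʳ + inv w = #true · #false`, the partitions `P(w)` and `P(wʳ)` both
have size `n` exactly when `w` has `a` letters `true`, `b` letters `false` and `ab/2`
inversions, where `ab + 2(a + b + 1) = 2n`. Reading off the number of `false`s after each
`true` turns these words into the partitions of `ab/2` in an `a × b` box, so there are
`N(a, b)` of them. Finally `ab` is even, so `a` and `b` are not both odd, and
`N(a, b) = N(b, a)` (reverse the word and swap its letters) pairs off the terms with one odd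
index.
-/

namespace BoundaryWord

def inversions : List Bool → ℕ
  | [] => 0
  | true :: t => t.count false + inversions t
  | false :: t => inversions t

lemma inversions_append (u v : List Bool) :
    inversions (u ++ v) = inversions u + inversions v + u.count true * v.count false := by
  induction u with
  | nil => simp [inversions]
  | cons b t ih => cases b <;> grind [inversions]

lemma inversions_reverse_add_inversions (w : List Bool) :
    inversions w.reverse + inversions w = w.count true * w.count false := by
  induction w with
  | nil => rfl
  | cons b t ih => cases b <;> grind [inversions, inversions_append]

lemma inversions_reverse_map_not (w : List Bool) :
    inversions (w.map not).reverse = inversions w := by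
  induction w with
  | nil => rfl
  | cons b t ih =>
    cases b <;> simp [inversions, inversions_append, ih, add_comm,
      ← List.count_map_of_injective t not Bool.not_injective false]

/-- Reads a boundary word from the smallest part upward, the current part being `c`:
each `true` widens it, each `false` closes a row. -/
def partsFrom : ℕ → List Bool → List ℕ
  | c, [] => [c]
  | c, false :: t => c :: partsFrom c t
  | c, true :: t => partsFrom (c + 1) t

def partitionOfWord (w : List Bool) : List ℕ := (partsFrom 1 w).reverse

lemma exists_partsFrom_eq_cons (c : ℕ) (w : List Bool) : ∃ a r, partsFrom c w = a :: r := by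
  cases w with
  | nil => exact ⟨c, [], rfl⟩
  | cons b t =>
    cases b
    · exact ⟨c, partsFrom c t, rfl⟩
    · exact exists_partsFrom_eq_cons (c + 1) t

lemma le_of_mem_partsFrom {c x : ℕ} {w : List Bool} (hx : x ∈ partsFrom c w) : c ≤ x := by
  induction w generalizing c with
  | nil => simp_all [partsFrom]
  | cons b t ih =>
    cases b
    · simp only [partsFrom, List.mem_cons] at hx
      exact hx.elim ge_of_eq ih
    · exact (c.le_succ).trans (ih hx)

lemma pairwise_partsFrom (c : ℕ) (w : List Bool) : (partsFrom c w).Pairwise (· ≤ ·) := by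
  induction w generalizing c with
  | nil => simp [partsFrom]
  | cons b t ih =>
    cases b
    · exact List.pairwise_cons.2 ⟨fun _ => le_of_mem_partsFrom, ih c⟩
    · exact ih (c + 1)

lemma sum_partsFrom (c : ℕ) (w : List Bool) :
    (partsFrom c w).sum = c * (w.count false + 1) + w.count true + inversions w := by
  induction w generalizing c with
  | nil => simp [partsFrom, inversions]
  | cons b t ih => cases b <;> grind [partsFrom, inversions]

lemma partsFrom_replicate_true_append (c k : ℕ) (w : List Bool) :
    partsFrom c (List.replicate k true ++ w) = partsFrom (c + k) w := by
  induction k generalizing c with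
  | zero => rfl
  | succ k ih =>
    simp [List.replicate_succ, partsFrom, ih, Nat.add_right_comm c 1 k, add_assoc]

lemma partsFrom_wordAux {c : ℕ} {r : List ℕ} (hr : r.Pairwise (· ≤ ·))
    (hc : ∀ x ∈ r, c ≤ x) : partsFrom c (wordAux c r) = c :: r := by
  induction r generalizing c with
  | nil => rfl
  | cons a r ih =>
    obtain ⟨har, hr⟩ := List.pairwise_cons.1 hr
    have hca : c + (a - c) = a := Nat.add_sub_cancel' (hc a List.mem_cons_self)
    simp only [wordAux, List.cons_append, partsFrom, partsFrom_replicate_true_append, hca,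
      ih hr har]

lemma replicate_append_wordAux_of_partsFrom {c a : ℕ} {r : List ℕ} {w : List Bool}
    (h : partsFrom c w = a :: r) : List.replicate (a - c) true ++ wordAux a r = w := by
  induction w generalizing c a r with
  | nil =>
    obtain ⟨rfl, rfl⟩ := List.cons.inj h.symm
    simp [wordAux]
  | cons b t ih =>
    cases b
    · obtain ⟨rfl, rfl⟩ := List.cons.inj h.symm
      obtain ⟨a', r', ht⟩ := exists_partsFrom_eq_cons a t
      simpa [ht, wordAux] using ih ht
    · have hca : c + 1 ≤ a := le_of_mem_partsFrom (h ▸ List.mem_cons_self)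
      rw [show a - c = a - (c + 1) + 1 by omega, List.replicate_succ, List.cons_append, ih h]

lemma isPartition_partitionOfWord (w : List Bool) : IsPartition (partitionOfWord w) :=
  ⟨List.pairwise_reverse.2 (pairwise_partsFrom 1 w),
    fun _ hx => le_of_mem_partsFrom (List.mem_reverse.1 hx)⟩

lemma sum_partitionOfWord (w : List Bool) :
    (partitionOfWord w).sum = w.length + inversions w + 1 := by
  rw [partitionOfWord, List.sum_reverse, sum_partsFrom, ← List.count_true_add_count_false w]
  ring

lemma partitionWord_partitionOfWord (w : List Bool) : partitionWord (partitionOfWord w) = w := by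
  obtain ⟨a, r, h⟩ := exists_partsFrom_eq_cons 1 w
  simpa [partitionWord, partitionOfWord, h] using replicate_append_wordAux_of_partsFrom h

lemma partitionOfWord_partitionWord {l : List ℕ} (hl : IsPartition l) (hne : l ≠ []) :
    partitionOfWord (partitionWord l) = l := by
  obtain ⟨a, r, h⟩ := List.exists_cons_of_ne_nil (List.reverse_ne_nil_iff.2 hne)
  have hsorted : (a :: r).Pairwise (· ≤ ·) := h ▸ List.pairwise_reverse.2 hl.1
  obtain ⟨har, hr⟩ := List.pairwise_cons.1 hsorted
  have ha : 1 + (a - 1) = a :=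
    Nat.add_sub_cancel' (hl.2 a (List.mem_reverse.1 (h ▸ List.mem_cons_self)))
  rw [partitionOfWord, partitionWord, h, partsFrom_replicate_true_append, ha,
    partsFrom_wordAux hr har, ← h, List.reverse_reverse]

lemma sum_eq_length_partitionWord {l : List ℕ} (hl : IsPartition l) (hne : l ≠ []) :
    l.sum = (partitionWord l).length + inversions (partitionWord l) + 1 := by
  rw [← sum_partitionOfWord, partitionOfWord_partitionWord hl hne]

/-- The words `w` for which `P(w)` and `P(wʳ)` are both partitions of `n`. -/
def reversibleWords (n : ℕ) : Set (List Bool) :=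
  {w | w.length + inversions w + 1 = n ∧ w.length + inversions w.reverse + 1 = n}

lemma rCount_eq_ncard_reversibleWords {n : ℕ} (hn : 1 ≤ n) :
    RCount n = (reversibleWords n).ncard := by
  have ne_nil {l : List ℕ} (h : l.sum = n) : l ≠ [] := by rintro rfl; simp at h; omega
  refine Set.ncard_congr (fun l _ => partitionWord l) ?_ ?_ ?_
  · rintro l ⟨hl, hsum, μ, hμ, hμsum, hμl⟩
    have hμ' := sum_eq_length_partitionWord hμ (ne_nil hμsum)
    rw [hμl, List.length_reverse] at hμ'
    exact ⟨sum_eq_length_partitionWord hl (ne_nil hsum) ▸ hsum, hμ' ▸ hμsum⟩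
  · rintro l₁ l₂ ⟨hl₁, hsum₁, -⟩ ⟨hl₂, hsum₂, -⟩ h
    rw [← partitionOfWord_partitionWord hl₁ (ne_nil hsum₁),
      ← partitionOfWord_partitionWord hl₂ (ne_nil hsum₂), h]
  · rintro w ⟨hw, hwr⟩
    refine ⟨partitionOfWord w, ⟨isPartition_partitionOfWord w, ?_, partitionOfWord w.reverse,
      isPartition_partitionOfWord _, ?_, ?_⟩, partitionWord_partitionOfWord w⟩
    · rw [sum_partitionOfWord, hw]
    · rw [sum_partitionOfWord, List.length_reverse, hwr]
    · rw [partitionWord_partitionOfWord, partitionWord_partitionOfWord]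

def boxRows : List Bool → List ℕ
  | [] => []
  | true :: t => t.count false :: boxRows t
  | false :: t => boxRows t

def boxWord : ℕ → List ℕ → List Bool
  | b, [] => List.replicate b false
  | b, x :: r => List.replicate (b - x) false ++ true :: boxWord x r

lemma length_boxRows (w : List Bool) : (boxRows w).length = w.count true := by
  induction w with
  | nil => rfl
  | cons b t ih => cases b <;> simp [boxRows, ih]

lemma sum_boxRows (w : List Bool) : (boxRows w).sum = inversions w := by
  induction w with
  | nil => rfl
  | cons b t ih => cases b <;> simp [boxRows, inversions, ih]

lemma le_of_mem_boxRows {w : List Bool} {x : ℕ} (hx : x ∈ boxRows w) : x ≤ w.count false := by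
  induction w with
  | nil => simp [boxRows] at hx
  | cons b t ih =>
    cases b
    · simpa using (ih hx).trans (Nat.le_succ _)
    · simp only [boxRows, List.mem_cons] at hx
      rcases hx with rfl | hx
      · simp
      · simpa using ih hx

lemma pairwise_boxRows (w : List Bool) : (boxRows w).Pairwise (· ≥ ·) := by
  induction w with
  | nil => simp [boxRows]
  | cons b t ih =>
    cases b
    · exact ih
    · exact List.pairwise_cons.2 ⟨fun _ => le_of_mem_boxRows, ih⟩

lemma count_true_boxWord (b : ℕ) (r : List ℕ) : (boxWord b r).count true = r.length := by
  induction r generalizing b with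
  | nil => simp [boxWord, List.count_replicate]
  | cons x r ih => simp [boxWord, List.count_replicate, ih]

lemma count_false_boxWord {b : ℕ} {r : List ℕ} (hr : r.Pairwise (· ≥ ·))
    (hb : ∀ x ∈ r, x ≤ b) : (boxWord b r).count false = b := by
  induction r generalizing b with
  | nil => simp [boxWord]
  | cons x r ih =>
    obtain ⟨hxr, hr⟩ := List.pairwise_cons.1 hr
    simp [boxWord, ih hr hxr, Nat.sub_add_cancel (hb x List.mem_cons_self)]

lemma boxRows_replicate_false_append (k : ℕ) (w : List Bool) :
    boxRows (List.replicate k false ++ w) = boxRows w := by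
  induction k with
  | zero => rfl
  | succ k ih => simpa [List.replicate_succ, boxRows] using ih

lemma boxRows_boxWord {b : ℕ} {r : List ℕ} (hr : r.Pairwise (· ≥ ·))
    (hb : ∀ x ∈ r, x ≤ b) : boxRows (boxWord b r) = r := by
  induction r generalizing b with
  | nil => simpa [boxWord, boxRows] using boxRows_replicate_false_append b []
  | cons x r ih =>
    obtain ⟨hxr, hr⟩ := List.pairwise_cons.1 hr
    rw [boxWord, boxRows_replicate_false_append, boxRows, count_false_boxWord hr hxr,
      ih hr hxr]

lemma boxWord_succ {b : ℕ} {r : List ℕ} (hb : ∀ x ∈ r, x ≤ b) :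
    boxWord (b + 1) r = false :: boxWord b r := by
  cases r with
  | nil => rfl
  | cons x r => simp [boxWord, Nat.sub_add_comm (hb x List.mem_cons_self), List.replicate_succ]

lemma boxWord_boxRows (w : List Bool) : boxWord (w.count false) (boxRows w) = w := by
  induction w with
  | nil => rfl
  | cons b t ih =>
    cases b
    · simpa [boxRows, boxWord_succ fun _ => le_of_mem_boxRows] using ih
    · simpa [boxRows, boxWord] using ih

def boxWords (a b m : ℕ) : Set (List Bool) :=
  {w | w.count true = a ∧ w.count false = b ∧ inversions w = m}

def boxPartitions (a b m : ℕ) : Set (Fin a → ℕ) :=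
  {μ | Antitone μ ∧ (∀ i, μ i ≤ b) ∧ ∑ i, μ i = m}

lemma ncard_boxPartitions (a b m : ℕ) :
    (boxPartitions a b m).ncard = (boxWords a b m).ncard := by
  have pairwise_ofFn {μ : Fin a → ℕ} (hμ : Antitone μ) :
      (List.ofFn μ).Pairwise (· ≥ ·) :=
    List.pairwise_ofFn.2 fun _ _ hij => hμ hij.le
  have le_of_mem_ofFn {μ : Fin a → ℕ} (hμ : ∀ i, μ i ≤ b) :
      ∀ x ∈ List.ofFn μ, x ≤ b := by
    simpa [List.mem_ofFn] using hμ
  refine Set.ncard_congr (fun μ _ => boxWord b (List.ofFn μ)) ?_ ?_ ?_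
  · rintro μ ⟨hμ, hμb, hμm⟩
    have hrows := boxRows_boxWord (pairwise_ofFn hμ) (le_of_mem_ofFn hμb)
    refine ⟨by simp [count_true_boxWord],
      count_false_boxWord (pairwise_ofFn hμ) (le_of_mem_ofFn hμb), ?_⟩
    rw [← sum_boxRows, hrows, List.sum_ofFn, hμm]
  · rintro μ ν ⟨hμ, hμb, -⟩ ⟨hν, hνb, -⟩ h
    have := congrArg boxRows h
    rw [boxRows_boxWord (pairwise_ofFn hμ) (le_of_mem_ofFn hμb),
      boxRows_boxWord (pairwise_ofFn hν) (le_of_mem_ofFn hνb)] at this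
    exact List.ofFn_injective this
  · rintro w ⟨rfl, rfl, rfl⟩
    have hlen := length_boxRows w
    set μ : Fin (w.count true) → ℕ := fun i => (boxRows w)[i.cast hlen.symm]
    have hμ : List.ofFn μ = boxRows w := List.ext_getElem (by simp [hlen]) (by simp [μ])
    refine ⟨μ, ⟨?_, fun i => le_of_mem_boxRows (List.getElem_mem _), ?_⟩,
      by rw [hμ, boxWord_boxRows]⟩
    · exact antitone_iff_forall_lt.2 (List.pairwise_ofFn.1 (hμ ▸ pairwise_boxRows w))
    · rw [← List.sum_ofFn, hμ, sum_boxRows]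

lemma ncard_boxWords_comm (a b m : ℕ) :
    (boxWords a b m).ncard = (boxWords b a m).ncard := by
  have maps_to {a b : ℕ} (w : List Bool) (hw : w ∈ boxWords a b m) :
      (w.map not).reverse ∈ boxWords b a m := by
    obtain ⟨rfl, rfl, rfl⟩ := hw
    refine ⟨?_, ?_, inversions_reverse_map_not w⟩ <;>
      simp [← List.count_map_of_injective w not Bool.not_injective]
  have involutive (w : List Bool) : ((w.map not).reverse.map not).reverse = w := by
    simp [List.map_reverse, Function.comp_def]
  refine Set.ncard_congr (fun w _ => (w.map not).reverse) maps_to ?_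
    fun w hw => ⟨_, maps_to w hw, involutive w⟩
  intro w v _ _ h
  rw [← involutive w, ← involutive v, h]

lemma nRect_eq_ncard_boxWords (a b : ℕ) : NRect a b = (boxWords a b (a * b / 2)).ncard :=
  ncard_boxPartitions a b _

lemma nRect_comm (a b : ℕ) : NRect a b = NRect b a := by
  rw [nRect_eq_ncard_boxWords, nRect_eq_ncard_boxWords, ncard_boxWords_comm, mul_comm]

lemma finite_boxWords (a b m : ℕ) : (boxWords a b m).Finite :=
  (List.finite_length_eq Bool (a + b)).subset fun w ⟨ha, hb, _⟩ => by
    rw [Set.mem_ofPred_eq, ← List.count_true_add_count_false w, ha, hb]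

def boxIndex (n : ℕ) : Finset (ℕ × ℕ) :=
  (Finset.range n ×ˢ Finset.range n).filter fun p => p.1 * p.2 + 2 * (p.1 + p.2 + 1) = 2 * n

lemma mem_boxIndex {n : ℕ} {p : ℕ × ℕ} :
    p ∈ boxIndex n ↔ p.1 * p.2 + 2 * (p.1 + p.2 + 1) = 2 * n := by
  simp only [boxIndex, Finset.mem_filter, Finset.mem_product, Finset.mem_range,
    and_iff_right_iff_imp]
  omega

lemma reversibleWords_eq_biUnion (n : ℕ) :
    reversibleWords n = ⋃ p ∈ boxIndex n, boxWords p.1 p.2 (p.1 * p.2 / 2) := by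
  ext w
  simp only [reversibleWords, boxWords, mem_boxIndex, Set.mem_ofPred_eq, Set.mem_iUnion,
    exists_prop, Prod.exists]
  have hinv := inversions_reverse_add_inversions w
  have hlen := List.count_true_add_count_false w
  constructor
  · rintro ⟨h, hr⟩
    exact ⟨_, _, by omega, rfl, rfl, by omega⟩
  · rintro ⟨a, b, hab, rfl, rfl, hinv⟩
    omega

lemma rCount_eq_sum_nRect {n : ℕ} (hn : 1 ≤ n) :
    RCount n = ∑ p ∈ boxIndex n, NRect p.1 p.2 := by
  have disjoint : (boxIndex n : Set (ℕ × ℕ)).PairwiseDisjoint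
      fun p => boxWords p.1 p.2 (p.1 * p.2 / 2) := by
    rintro p - q - hpq
    exact Set.disjoint_left.2 fun w ⟨ha, hb, _⟩ ⟨ha', hb', _⟩ =>
      hpq (Prod.ext (ha ▸ ha') (hb ▸ hb'))
  rw [rCount_eq_ncard_reversibleWords hn, reversibleWords_eq_biUnion, ← Finset.set_biUnion_coe,
    (boxIndex n).finite_toSet.ncard_biUnion (fun p _ => finite_boxWords _ _ _) disjoint,
    finsum_mem_coe_finset]
  exact Finset.sum_congr rfl fun p _ => (nRect_eq_ncard_boxWords _ _).symm

section ParitySplit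

open Finset

variable (n : ℕ)

lemma sum_boxIndex_even_even (g : ℕ × ℕ → ℕ) :
    ∑ p ∈ ((boxIndex n).filter fun p => Even p.2).filter fun p => Even p.1, g p =
      ∑ p ∈ (range n ×ˢ range n).filter (fun p => 2 * p.1 * p.2 + 2 * p.1 + 2 * p.2 + 1 = n),
        g (2 * p.1, 2 * p.2) := by
  symm
  refine sum_bij (fun p _ => (2 * p.1, 2 * p.2)) ?_ ?_ ?_ fun _ _ => rfl
  · rintro ⟨k, l⟩ hkl
    simp only [mem_filter, mem_product, mem_range, mem_boxIndex] at hkl ⊢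
    exact ⟨⟨by linarith, even_two_mul l⟩, even_two_mul k⟩
  · rintro ⟨k, l⟩ - ⟨k', l'⟩ - h
    simp only [Prod.mk.injEq] at h ⊢
    omega
  · rintro ⟨a, b⟩ hab
    simp only [mem_filter, mem_boxIndex] at hab
    obtain ⟨⟨hab, l, rfl⟩, k, rfl⟩ := hab
    refine ⟨(k, l), ?_, by simp only [two_mul]⟩
    simp only [mem_filter, mem_product, mem_range]
    exact ⟨⟨by omega, by omega⟩, by linarith⟩

lemma sum_boxIndex_odd_even (g : ℕ × ℕ → ℕ) :
    ∑ p ∈ ((boxIndex n).filter fun p => Even p.2).filter fun p => ¬Even p.1, g p =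
      ∑ p ∈ (range n ×ˢ range n).filter (fun p => 2 * p.1 * p.2 + 2 * p.1 + 3 * p.2 + 2 = n),
        g (2 * p.1 + 1, 2 * p.2) := by
  symm
  refine sum_bij (fun p _ => (2 * p.1 + 1, 2 * p.2)) ?_ ?_ ?_ fun _ _ => rfl
  · rintro ⟨k, l⟩ hkl
    simp only [mem_filter, mem_product, mem_range, mem_boxIndex, Nat.not_even_iff_odd] at hkl ⊢
    exact ⟨⟨by linarith, even_two_mul l⟩, odd_two_mul_add_one k⟩
  · rintro ⟨k, l⟩ - ⟨k', l'⟩ - h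
    simp only [Prod.mk.injEq] at h ⊢
    omega
  · rintro ⟨a, b⟩ hab
    simp only [mem_filter, mem_boxIndex, Nat.not_even_iff_odd] at hab
    obtain ⟨⟨hab, l, rfl⟩, k, rfl⟩ := hab
    refine ⟨(k, l), ?_, by simp only [two_mul]⟩
    simp only [mem_filter, mem_product, mem_range]
    exact ⟨⟨by omega, by omega⟩, by linarith⟩

lemma sum_boxIndex_odd (g : ℕ × ℕ → ℕ) :
    ∑ p ∈ (boxIndex n).filter fun p => ¬Even p.2, g p =
      ∑ p ∈ (range n ×ˢ range n).filter (fun p => 2 * p.1 * p.2 + 2 * p.1 + 3 * p.2 + 2 = n),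
        g (2 * p.2, 2 * p.1 + 1) := by
  symm
  refine sum_bij (fun p _ => (2 * p.2, 2 * p.1 + 1)) ?_ ?_ ?_ fun _ _ => rfl
  · rintro ⟨k, l⟩ hkl
    simp only [mem_filter, mem_product, mem_range, mem_boxIndex, Nat.not_even_iff_odd] at hkl ⊢
    exact ⟨by linarith, odd_two_mul_add_one k⟩
  · rintro ⟨k, l⟩ - ⟨k', l'⟩ - h
    simp only [Prod.mk.injEq] at h ⊢
    omega
  · rintro ⟨a, b⟩ hab
    simp only [mem_filter, mem_boxIndex, Nat.not_even_iff_odd] at hab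
    obtain ⟨hab, k, rfl⟩ := hab
    have hodd : Even (a * (2 * k + 1)) := by rw [Nat.even_iff]; omega
    obtain ⟨l, rfl⟩ :=
      (Nat.even_mul.1 hodd).resolve_right (Nat.not_even_iff_odd.2 (odd_two_mul_add_one k))
    refine ⟨(k, l), ?_, by simp only [two_mul]⟩
    simp only [mem_filter, mem_product, mem_range]
    exact ⟨⟨by omega, by omega⟩, by linarith⟩

lemma sum_boxIndex (f : ℕ → ℕ → ℕ) (hf : ∀ a b, f a b = f b a) :
    ∑ p ∈ boxIndex n, f p.1 p.2 =
      (∑ p ∈ (range n ×ˢ range n).filter (fun p => 2 * p.1 * p.2 + 2 * p.1 + 2 * p.2 + 1 = n),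
        f (2 * p.1) (2 * p.2)) +
      2 * ∑ p ∈ (range n ×ˢ range n).filter
          (fun p => 2 * p.1 * p.2 + 2 * p.1 + 3 * p.2 + 2 = n), f (2 * p.1 + 1) (2 * p.2) := by
  rw [← sum_filter_add_sum_filter_not (boxIndex n) (fun p => Even p.2),
    ← sum_filter_add_sum_filter_not (filter _ (boxIndex n)) (fun p => Even p.1),
    sum_boxIndex_even_even n (fun p => f p.1 p.2), sum_boxIndex_odd_even n (fun p => f p.1 p.2),
    sum_boxIndex_odd n (fun p => f p.1 p.2)]
  simp only [fun k l => hf (2 * l) (2 * k + 1)]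
  ring

end ParitySplit

end BoundaryWord

/-- coefficient form of the generating function for `R(n)`:
`R(n) = Σ_{2kl+2k+2l+1=n} N(2k,2l) + 2 Σ_{2kl+2k+3l+2=n} N(2k+1,2l)`, where
`N(a,b)` counts partitions of `a*b/2` inside an `a × b` rectangle. -/
theorem palindromePaper_stmt14 (n : ℕ) (hn : 1 ≤ n) :
    RCount n =
      (∑ p ∈ (Finset.range n ×ˢ Finset.range n).filter
          (fun p => 2 * p.1 * p.2 + 2 * p.1 + 2 * p.2 + 1 = n),
        NRect (2 * p.1) (2 * p.2)) +
      2 * (∑ p ∈ (Finset.range n ×ˢ Finset.range n).filter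
          (fun p => 2 * p.1 * p.2 + 2 * p.1 + 3 * p.2 + 2 = n),
        NRect (2 * p.1 + 1) (2 * p.2)) := by
  rw [BoundaryWord.rCount_eq_sum_nRect hn]
  exact BoundaryWord.sum_boxIndex n NRect BoundaryWord.nRect_comm
end
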